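/- Let μ > 0 and -1 < U₀ < 0. Then there exists a unique k_crit > 0 such that λ_μ'(k_crit) = -U₀. Setting ω_crit = λ_μ(k_crit) + U₀·k_crit, the map ξ ↦ λ_μ(ξ) + U₀ξ is strictly increasing on the interval [-k_crit, k_crit] and is a bijection from [-k_crit, k_crit] onto [-ω_crit, ω_crit]. -/

import Mathlib

/-!
With `s = √μ r`, for `r ≥ 0` one has `λ_μ(r) = √(s tanh s) / √μ`, hence
`λ_μ'(r) = v(√μ r)` with `v = groupVelocity`, `v(s) = √(tanh s / s) · (1 + 2s / sinh 2s) / 2`.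
Both factors of `v` are positive and decreasing on `(0, ∞)`, the first one strictly, and `v`
falls from `1` at `0⁺` to `0` at `∞`. So `λ_μ' = -U₀ ∈ (0, 1)` has exactly one positive
solution `k_crit`, and `λ_μ' + U₀ > 0` on `(0, k_crit)`. As `ξ ↦ λ_μ(ξ) + U₀ξ` is odd and
continuous, its strict monotonicity on `[0, k_crit]` extends to `[-k_crit, k_crit]`, and the
intermediate value theorem makes it a bijection onto `[-ω_crit, ω_crit]`.
-/

noncomputable section

open Real Set Filter Topology

/-- The dispersion function of the linear water wave problem. -/
def lamμ (μ : ℝ) (r : ℝ) : ℝ :=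
  Real.sign r * Real.sqrt (r * Real.tanh (Real.sqrt μ * r) / Real.sqrt μ)

namespace Real

lemma tanh_pos {x : ℝ} (hx : 0 < x) : 0 < tanh x := by
  rw [tanh_eq_sinh_div_cosh]
  exact div_pos (sinh_pos_iff.2 hx) (cosh_pos x)

lemma hasDerivAt_tanh (x : ℝ) : HasDerivAt tanh (1 / cosh x ^ 2) x := by
  have h : HasDerivAt (fun y => sinh y / cosh y) _ x :=
    (hasDerivAt_sinh x).div (hasDerivAt_cosh x) (cosh_pos x).ne'
  rw [← funext tanh_eq_sinh_div_cosh] at h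
  refine h.congr_deriv ?_
  rw [← cosh_sq_sub_sinh_sq x]
  ring

@[fun_prop]
lemma continuous_tanh : Continuous tanh :=
  continuous_iff_continuousAt.2 fun x => (hasDerivAt_tanh x).continuousAt

lemma tanh_lt_self {x : ℝ} (hx : 0 < x) : tanh x < x := by
  have hmono : StrictMonoOn (fun y => y - tanh y) (Ici 0) := by
    refine strictMonoOn_of_deriv_pos (convex_Ici 0)
      (continuous_id.sub continuous_tanh).continuousOn fun y hy => ?_
    rw [interior_Ici] at hy
    have hd : HasDerivAt (fun y => y - tanh y) (1 - 1 / cosh y ^ 2) y :=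
      (hasDerivAt_id y).sub (hasDerivAt_tanh y)
    rw [hd.deriv, sub_pos, div_lt_one (by positivity)]
    nlinarith [one_lt_cosh.2 (ne_of_gt hy)]
  simpa using hmono self_mem_Ici hx.le hx

end Real

lemma HasDerivAt.tendsto_div_self_nhdsGT {f : ℝ → ℝ} {f' : ℝ} (hf : HasDerivAt f f' 0)
    (h0 : f 0 = 0) : Tendsto (fun t => f t / t) (𝓝[>] 0) (𝓝 f') := by
  simpa [h0, div_eq_inv_mul] using hf.tendsto_slope_zero_right

lemma strictAntiOn_tanh_div_self : StrictAntiOn (fun s => tanh s / s) (Ioi 0) := by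
  refine strictAntiOn_of_deriv_neg (convex_Ioi 0)
    (continuous_tanh.continuousOn.div continuousOn_id fun s hs => ne_of_gt hs) fun s hs => ?_
  rw [interior_Ioi] at hs
  have hs : 0 < s := hs
  have hd : HasDerivAt (fun s => tanh s / s) ((1 / cosh s ^ 2 * s - tanh s * 1) / s ^ 2) s :=
    (hasDerivAt_tanh s).div (hasDerivAt_id s) hs.ne'
  rw [hd.deriv]
  have h2 : 2 * s < 2 * sinh s * cosh s := by
    rw [← sinh_two_mul]; exact self_lt_sinh_iff.2 (by positivity)
  have hc := cosh_pos s
  apply div_neg_of_neg_of_pos _ (by positivity)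
  rw [tanh_eq_sinh_div_cosh, sub_neg, mul_one, div_mul_eq_mul_div, one_mul,
    div_lt_div_iff₀ (by positivity) hc]
  nlinarith

lemma strictAntiOn_self_div_sinh : StrictAntiOn (fun s => s / sinh s) (Ioi 0) := by
  refine strictAntiOn_of_deriv_neg (convex_Ioi 0)
    (continuousOn_id.div continuous_sinh.continuousOn fun s hs => (sinh_pos_iff.2 hs).ne')
    fun s hs => ?_
  rw [interior_Ioi] at hs
  have hs : 0 < s := hs
  have hsinh : 0 < sinh s := sinh_pos_iff.2 hs
  have hd : HasDerivAt (fun s => s / sinh s) ((1 * sinh s - s * cosh s) / sinh s ^ 2) s :=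
    (hasDerivAt_id s).div (hasDerivAt_sinh s) hsinh.ne'
  rw [hd.deriv]
  have h := tanh_lt_self hs
  rw [tanh_eq_sinh_div_cosh, div_lt_iff₀ (cosh_pos s)] at h
  exact div_neg_of_neg_of_pos (by simpa using h) (by positivity)

lemma StrictMonoOn.bijOn_Icc {α δ : Type*} [ConditionallyCompleteLinearOrder α]
    [TopologicalSpace α] [OrderTopology α] [DenselyOrdered α] [LinearOrder δ]
    [TopologicalSpace δ] [OrderClosedTopology δ] {f : α → δ} {a b : α} (hab : a ≤ b)
    (hf : StrictMonoOn f (Icc a b)) (hc : ContinuousOn f (Icc a b)) :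
    BijOn f (Icc a b) (Icc (f a) (f b)) :=
  ⟨fun _ hx => ⟨hf.monotoneOn (left_mem_Icc.2 hab) hx hx.1,
      hf.monotoneOn hx (right_mem_Icc.2 hab) hx.2⟩,
    hf.injOn, hc.surjOn_Icc (left_mem_Icc.2 hab) (right_mem_Icc.2 hab)⟩

namespace Function.Odd

variable {α β : Type*} [AddCommGroup α] [LinearOrder α] [IsOrderedAddMonoid α]

lemma continuous_of_continuousOn_Ici [TopologicalSpace α] [OrderTopology α]
    [TopologicalSpace β] [InvolutiveNeg β] [ContinuousNeg β] {f : α → β} (hf : f.Odd)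
    (h : ContinuousOn f (Ici 0)) : Continuous f := by
  have hIic : ContinuousOn f (Iic 0) := by
    refine ((h.comp continuous_neg.continuousOn fun x hx => neg_nonneg.2 hx).neg).congr
      fun x _ => ?_
    simp [hf x]
  rw [← continuousOn_univ, ← Iic_union_Ici (a := (0 : α))]
  exact hIic.union_of_isClosed h isClosed_Iic isClosed_Ici

lemma strictMonoOn_Icc_neg [AddCommGroup β] [PartialOrder β] [IsOrderedAddMonoid β]
    {f : α → β} (hf : f.Odd) {k : α} (hk : 0 ≤ k) (h : StrictMonoOn f (Icc 0 k)) :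
    StrictMonoOn f (Icc (-k) k) := by
  have hneg : StrictMonoOn f (Icc (-k) 0) := fun x hx y hy hxy => by
    have := h ⟨neg_nonneg.2 hy.2, neg_le.1 hy.1⟩ ⟨neg_nonneg.2 hx.2, neg_le.1 hx.1⟩
      (neg_lt_neg hxy)
    rwa [hf, hf, neg_lt_neg_iff] at this
  rw [← Icc_union_Icc_eq_Icc (neg_nonpos.2 hk) hk]
  exact hneg.union h (isGreatest_Icc (neg_nonpos.2 hk)) (isLeast_Icc hk)

end Function.Odd

def groupVelocity (s : ℝ) : ℝ := √(tanh s / s) * ((1 + 2 * s / sinh (2 * s)) / 2)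

lemma hasDerivAt_sqrt_mul_tanh {s : ℝ} (hs : 0 < s) :
    HasDerivAt (fun s => √(s * tanh s)) (groupVelocity s) s := by
  have ht := tanh_pos hs
  have h : HasDerivAt (fun s => √(s * tanh s))
      ((1 * tanh s + s * (1 / cosh s ^ 2)) / (2 * √(s * tanh s))) s :=
    ((hasDerivAt_id s).mul (hasDerivAt_tanh s)).sqrt (mul_pos hs ht).ne'
  refine h.congr_deriv ?_
  have hsqrt : √(tanh s / s) = √(s * tanh s) / s := by
    rw [show tanh s / s = s * tanh s / s ^ 2 by field_simp, sqrt_div (by positivity),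
      sqrt_sq hs.le]
  rw [groupVelocity, hsqrt, sinh_two_mul]
  field_simp
  rw [sq_sqrt (by positivity), tanh_eq_sinh_div_cosh]
  field_simp

lemma groupVelocity_pos {s : ℝ} (hs : 0 < s) : 0 < groupVelocity s := by
  have := tanh_pos hs
  have := sinh_pos_iff.2 (by positivity : 0 < 2 * s)
  unfold groupVelocity
  positivity

lemma strictAntiOn_groupVelocity : StrictAntiOn groupVelocity (Ioi 0) := by
  intro a (ha : 0 < a) b (hb : 0 < b) hab
  have h₁ : √(tanh b / b) < √(tanh a / a) :=
    sqrt_lt_sqrt (div_pos (tanh_pos hb) hb).le (strictAntiOn_tanh_div_self ha hb hab)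
  have h₂ : 2 * b / sinh (2 * b) ≤ 2 * a / sinh (2 * a) :=
    (strictAntiOn_self_div_sinh (mem_Ioi.2 (by positivity)) (mem_Ioi.2 (by positivity))
      (by linarith)).le
  have := sinh_pos_iff.2 (by positivity : 0 < 2 * b)
  unfold groupVelocity
  calc √(tanh b / b) * ((1 + 2 * b / sinh (2 * b)) / 2)
      < √(tanh a / a) * ((1 + 2 * b / sinh (2 * b)) / 2) := by gcongr
    _ ≤ √(tanh a / a) * ((1 + 2 * a / sinh (2 * a)) / 2) := by gcongr

lemma continuousOn_groupVelocity : ContinuousOn groupVelocity (Ioi 0) := by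
  unfold groupVelocity
  fun_prop (disch := intro s (hs : 0 < s); first
    | exact hs.ne'
    | exact (sinh_pos_iff.2 (by positivity)).ne')

lemma tendsto_groupVelocity_nhdsGT_zero : Tendsto groupVelocity (𝓝[>] 0) (𝓝 1) := by
  have h₁ : Tendsto (fun s => √(tanh s / s)) (𝓝[>] 0) (𝓝 1) := by
    simpa using ((hasDerivAt_tanh 0).tendsto_div_self_nhdsGT tanh_zero).sqrt
  have h₂ : Tendsto (fun s => sinh (2 * s) / s) (𝓝[>] 0) (𝓝 2) := by
    simpa using ((hasDerivAt_id (0 : ℝ)).const_mul 2).sinh.tendsto_div_self_nhdsGT (by simp)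
  have h₃ : Tendsto (fun s => (1 + 2 * s / sinh (2 * s)) / 2) (𝓝[>] 0) (𝓝 1) := by
    have := (((tendsto_const_nhds (x := (2 : ℝ))).div h₂ two_ne_zero).const_add 1).div_const 2
    simpa [div_div_eq_mul_div, mul_comm] using this
  have := h₁.mul h₃
  rwa [mul_one] at this

lemma groupVelocity_le_sqrt_inv {s : ℝ} (hs : 0 < s) : groupVelocity s ≤ √(s⁻¹) := by
  have h₁ : √(tanh s / s) ≤ √(s⁻¹) := by
    gcongr
    rw [div_eq_mul_inv]
    exact mul_le_of_le_one_left (by positivity) (tanh_lt_one s).le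
  have h₂ : 2 * s / sinh (2 * s) ≤ 1 :=
    div_le_one_of_le₀ (self_le_sinh_iff.2 (by positivity)) (sinh_nonneg_iff.2 (by positivity))
  have := sinh_pos_iff.2 (by positivity : 0 < 2 * s)
  unfold groupVelocity
  calc √(tanh s / s) * ((1 + 2 * s / sinh (2 * s)) / 2) ≤ √(s⁻¹) * 1 := by
        gcongr
        linarith
    _ = √(s⁻¹) := mul_one _

lemma tendsto_groupVelocity_atTop : Tendsto groupVelocity atTop (𝓝 0) := by
  have h : Tendsto (fun s : ℝ => √(s⁻¹)) atTop (𝓝 0) := by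
    have := (continuous_sqrt.tendsto 0).comp tendsto_inv_atTop_zero
    rwa [sqrt_zero] at this
  refine tendsto_of_tendsto_of_tendsto_of_le_of_le' tendsto_const_nhds h ?_ ?_
  · filter_upwards [eventually_gt_atTop 0] with s hs using (groupVelocity_pos hs).le
  · filter_upwards [eventually_gt_atTop 0] with s hs using groupVelocity_le_sqrt_inv hs

lemma surjOn_groupVelocity : SurjOn groupVelocity (Ioi 0) (Ioo 0 1) := by
  rintro ε ⟨hε₀, hε₁⟩
  obtain ⟨a, ha, ha₀⟩ :=
    ((tendsto_groupVelocity_nhdsGT_zero.eventually (lt_mem_nhds hε₁)).and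
      self_mem_nhdsWithin).exists
  obtain ⟨b, hb, hb₀⟩ :=
    ((tendsto_groupVelocity_atTop.eventually (gt_mem_nhds hε₀)).and
      (eventually_gt_atTop 0)).exists
  exact continuousOn_groupVelocity.surjOn_Icc hb₀ ha₀ ⟨hb.le, ha.le⟩

lemma lamμ_odd (μ : ℝ) : Function.Odd (lamμ μ) := fun r => by
  simp only [lamμ, Real.sign_neg, mul_neg, tanh_neg, neg_mul, neg_neg]

section lamμ

variable {μ : ℝ}

lemma lamμ_eq_of_nonneg (hμ : 0 < μ) {r : ℝ} (hr : 0 ≤ r) :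
    lamμ μ r = √(√μ * r * tanh (√μ * r)) / √μ := by
  have hc : 0 < √μ := sqrt_pos.2 hμ
  rcases hr.eq_or_lt with rfl | hr
  · simp [lamμ]
  have h : r * tanh (√μ * r) / √μ = √μ * r * tanh (√μ * r) / √μ ^ 2 := by field_simp
  rw [lamμ, Real.sign_of_pos hr, one_mul, h, sqrt_div' _ (sq_nonneg _), sqrt_sq hc.le]

lemma hasDerivAt_lamμ (hμ : 0 < μ) {r : ℝ} (hr : 0 < r) :
    HasDerivAt (lamμ μ) (groupVelocity (√μ * r)) r := by
  have hc : 0 < √μ := sqrt_pos.2 hμ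
  have h := ((hasDerivAt_sqrt_mul_tanh (by positivity : 0 < √μ * r)).comp r
    ((hasDerivAt_id r).const_mul √μ)).div_const √μ
  rw [mul_one, mul_div_cancel_right₀ _ hc.ne'] at h
  refine h.congr_of_eventuallyEq ?_
  filter_upwards [lt_mem_nhds hr] with x hx using lamμ_eq_of_nonneg hμ hx.le

lemma continuous_lamμ (hμ : 0 < μ) : Continuous (lamμ μ) := by
  refine (lamμ_odd μ).continuous_of_continuousOn_Ici (ContinuousOn.congr ?_
    fun r (hr : 0 ≤ r) => lamμ_eq_of_nonneg hμ hr)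
  exact (by fun_prop : Continuous fun r => √(√μ * r * tanh (√μ * r)) / √μ).continuousOn

lemma strictMonoOn_lamμ_add_mul (hμ : 0 < μ) {U₀ k : ℝ} (hk : 0 ≤ k)
    (hU₀ : -U₀ ≤ groupVelocity (√μ * k)) :
    StrictMonoOn (fun ξ => lamμ μ ξ + U₀ * ξ) (Icc (-k) k) := by
  have hodd : Function.Odd (fun ξ => lamμ μ ξ + U₀ * ξ) := fun ξ => by
    simp only [lamμ_odd μ ξ]; ring
  refine hodd.strictMonoOn_Icc_neg hk (strictMonoOn_of_deriv_pos (convex_Icc 0 k)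
    ((continuous_lamμ hμ).add (continuous_const_mul U₀)).continuousOn fun x hx => ?_)
  rw [interior_Icc] at hx
  obtain ⟨hx₀, hxk⟩ := hx
  have hd : HasDerivAt (fun ξ => lamμ μ ξ + U₀ * ξ) (groupVelocity (√μ * x) + U₀ * 1) x :=
    (hasDerivAt_lamμ hμ hx₀).add ((hasDerivAt_id x).const_mul U₀)
  rw [hd.deriv]
  have hc : 0 < √μ := sqrt_pos.2 hμ
  have := strictAntiOn_groupVelocity (mem_Ioi.2 (mul_pos hc hx₀))
    (mem_Ioi.2 (mul_pos hc (hx₀.trans hxk))) (mul_lt_mul_of_pos_left hxk hc)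
  linarith

end lamμ

theorem critical_wavenumber_opposing_current
    (μ : ℝ) (hμ : 0 < μ) (U₀ : ℝ) (hU₀l : -1 < U₀) (hU₀r : U₀ < 0) :
    (∃! kcrit : ℝ, 0 < kcrit ∧ deriv (lamμ μ) kcrit = -U₀)
    ∧ ∀ kcrit : ℝ, 0 < kcrit → deriv (lamμ μ) kcrit = -U₀ →
        StrictMonoOn (fun ξ => lamμ μ ξ + U₀ * ξ) (Set.Icc (-kcrit) kcrit)
        ∧ Set.BijOn (fun ξ => lamμ μ ξ + U₀ * ξ) (Set.Icc (-kcrit) kcrit)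
            (Set.Icc (-(lamμ μ kcrit + U₀ * kcrit)) (lamμ μ kcrit + U₀ * kcrit)) := by
  have hc : 0 < √μ := sqrt_pos.2 hμ
  have hderiv (k : ℝ) (hk : 0 < k) : deriv (lamμ μ) k = groupVelocity (√μ * k) :=
    (hasDerivAt_lamμ hμ hk).deriv
  obtain ⟨s, hs : 0 < s, hs_eq⟩ := surjOn_groupVelocity ⟨neg_pos.2 hU₀r, neg_lt.1 hU₀l⟩
  refine ⟨⟨s / √μ, ⟨by positivity, ?_⟩, ?_⟩, fun k hk hk_eq => ?_⟩
  · rw [hderiv _ (by positivity), mul_div_cancel₀ _ hc.ne', hs_eq]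
  · rintro k ⟨hk, hk_eq⟩
    rw [hderiv k hk, ← hs_eq] at hk_eq
    rw [eq_div_iff hc.ne', mul_comm]
    exact strictAntiOn_groupVelocity.injOn (mem_Ioi.2 (mul_pos hc hk)) hs hk_eq
  rw [hderiv k hk] at hk_eq
  have hmono := strictMonoOn_lamμ_add_mul hμ hk.le hk_eq.ge
  refine ⟨hmono, ?_⟩
  have hbij := hmono.bijOn_Icc (neg_le_self hk.le)
    ((continuous_lamμ hμ).add (continuous_const_mul U₀)).continuousOn
  rwa [lamμ_odd μ k, mul_neg, ← neg_add] at hbij
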